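/- Let J ≥ 0 be an integer and let (w, ρ) be an admissible weight pair of order J+1 on [0,∞). Then for every ε ∈ (0,1) there exists a constant C_ε > 0, depending only on ε, J and the weight constants, such that for every ψ ∈ C_c^∞((0,∞)): ∑_{k=0}^{J} ∫_0^∞ w(λ)² ρ(λ)^{2k} · λ² · ψ^{(k+2)}(λ) · ψ^{(k)}(λ) dλ ≤ −(1−ε) · ∑_{k=0}^{J} ∫_0^∞ w(λ)² ρ(λ)^{2k} · λ² · |ψ^{(k+1)}(λ)|² dλ + C_ε · ‖ψ‖_J². -/

import Mathlib

open scoped BigOperators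
open MeasureTheory
open Set

set_option maxHeartbeats 1000000


lemma tsupport_itd_subset (ψ : ℝ → ℝ) (k : ℕ) :
    tsupport (iteratedDeriv k ψ) ⊆ tsupport ψ := by
  induction k with
  | zero => simp [iteratedDeriv_zero]
  | succ n ih =>
    rw [iteratedDeriv_succ]
    exact (closure_minimal support_deriv_subset (isClosed_tsupport _)).trans ih

lemma hcs_itd {ψ : ℝ → ℝ} (hc : HasCompactSupport ψ) (k : ℕ) :
    HasCompactSupport (iteratedDeriv k ψ) := by
  induction k with
  | zero => simpa [iteratedDeriv_zero]
  | succ n ih => rw [iteratedDeriv_succ]; exact ih.deriv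

lemma cd_itd {ψ : ℝ → ℝ} (hψ : ContDiff ℝ (⊤ : ℕ∞) ψ) (k : ℕ) :
    ContDiff ℝ ((⊤:ℕ∞):WithTop ℕ∞) (iteratedDeriv k ψ) := by
  induction k with
  | zero => simpa [iteratedDeriv_zero] using hψ.of_le (by simp)
  | succ n ih => rw [iteratedDeriv_succ]; exact (contDiff_infty_iff_deriv.mp ih).2

lemma deriv_eq_zero_of_nmem_tsupport {F : ℝ → ℝ} {x : ℝ} (hx : x ∉ tsupport F) :
    deriv F x = 0 := by
  by_contra h
  exact hx (support_deriv_subset (by simpa [Function.mem_support] using h))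

lemma integral_Ioi_deriv_zero (F : ℝ → ℝ) (hF : ContDiff ℝ ((⊤:ℕ∞):WithTop ℕ∞) F)
    (hc : HasCompactSupport F) (hpos : tsupport F ⊆ Set.Ioi 0) :
    ∫ x in Set.Ioi (0:ℝ), deriv F x = 0 := by
  obtain ⟨R, hR⟩ := hc.isCompact.isBounded.subset_closedBall 0
  set B := |R| + 1 with hB
  have hRB : tsupport F ⊆ Set.Ioc 0 B := by
    intro x hx
    refine ⟨hpos hx, ?_⟩
    have := hR hx
    simp only [Metric.mem_closedBall, Real.dist_eq, sub_zero] at this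
    have : |x| ≤ R := this
    nlinarith [le_abs_self x, le_abs_self R, abs_nonneg x]
  have hdz : ∀ x, x ∉ Set.Ioc (0:ℝ) B → deriv F x = 0 := fun x hx =>
    deriv_eq_zero_of_nmem_tsupport (fun h => hx (hRB h))
  have hdz' : ∀ x, x ∉ Set.Ioi (0:ℝ) → deriv F x = 0 := fun x hx =>
    deriv_eq_zero_of_nmem_tsupport (fun h => hx (hpos h))
  have h1 : ∫ x in Set.Ioi (0:ℝ), deriv F x = ∫ x, deriv F x :=
    setIntegral_eq_integral_of_forall_compl_eq_zero hdz'
  have h2 : ∫ x in Set.Ioc (0:ℝ) B, deriv F x = ∫ x, deriv F x :=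
    setIntegral_eq_integral_of_forall_compl_eq_zero hdz
  have hB0 : (0:ℝ) ≤ B := by positivity
  have h3 : ∫ x in (0:ℝ)..B, deriv F x = F B - F 0 := by
    apply intervalIntegral.integral_deriv_eq_sub
    · intro x _; exact ((contDiff_infty_iff_deriv.mp hF).1 x)
    · exact ((contDiff_infty_iff_deriv.mp hF).2.continuous.intervalIntegrable _ _)
  have hF0 : F 0 = 0 := image_eq_zero_of_notMem_tsupport (fun h => by simpa using hpos h)
  have hFB : F B = 0 := image_eq_zero_of_notMem_tsupport (fun h => by
    have h2 := hR h
    simp only [Metric.mem_closedBall, Real.dist_eq, sub_zero] at h2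
    have : |B| ≤ R := h2
    have hBa : B ≤ |B| := le_abs_self B
    have : R ≤ |R| := le_abs_self R
    simp only [hB] at hBa
    nlinarith [abs_nonneg R, abs_nonneg (|R|+1)])
  rw [h1, ← h2, ← intervalIntegral.integral_of_le hB0, h3, hF0, hFB, sub_zero]


lemma ibp_core (G φ : ℝ → ℝ) (hG : ContDiff ℝ ((⊤:ℕ∞):WithTop ℕ∞) G)
    (hφ : ContDiff ℝ ((⊤:ℕ∞):WithTop ℕ∞) φ)
    (hc : HasCompactSupport φ) (hpos : tsupport φ ⊆ Set.Ioi 0) :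
    ∫ x in Set.Ioi (0:ℝ), G x * deriv (deriv φ) x * φ x
      = -(∫ x in Set.Ioi (0:ℝ), deriv G x * deriv φ x * φ x)
        - ∫ x in Set.Ioi (0:ℝ), G x * (deriv φ x)^2 := by
  set F : ℝ → ℝ := fun x => G x * deriv φ x * φ x with hF
  have hφ' : ContDiff ℝ ((⊤:ℕ∞):WithTop ℕ∞) (deriv φ) := (contDiff_infty_iff_deriv.mp hφ).2
  have hFc : ContDiff ℝ ((⊤:ℕ∞):WithTop ℕ∞) F := ((hG.mul hφ').mul hφ)
  have hFsupp : HasCompactSupport F := by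
    have : F = (fun x => G x * deriv φ x) * φ := rfl
    rw [this]; exact hc.mul_left
  have hFpos : tsupport F ⊆ Set.Ioi 0 := by
    refine (closure_minimal ?_ (isClosed_tsupport φ)).trans hpos
    intro x hx
    by_contra h
    have : φ x = 0 := image_eq_zero_of_notMem_tsupport (by simpa using h)
    simp [hF, this] at hx
  have hder : ∀ x, deriv F x = deriv G x * deriv φ x * φ x
      + G x * deriv (deriv φ) x * φ x + G x * (deriv φ x)^2 := by
    intro x
    have h1 : HasDerivAt G (deriv G x) x := ((contDiff_infty_iff_deriv.mp hG).1 x).hasDerivAt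
    have h2 : HasDerivAt φ (deriv φ x) x := ((contDiff_infty_iff_deriv.mp hφ).1 x).hasDerivAt
    have h3 : HasDerivAt (deriv φ) (deriv (deriv φ) x) x :=
      ((contDiff_infty_iff_deriv.mp hφ').1 x).hasDerivAt
    have := ((h1.fun_mul h3).fun_mul h2).deriv
    rw [hF, this]; ring
  have hint : ∀ f : ℝ → ℝ, Continuous f →
      IntegrableOn (fun x => f x * φ x) (Set.Ioi (0:ℝ)) := by
    intro f hf
    exact ((hf.mul hφ.continuous).integrable_of_hasCompactSupport hc.mul_left).integrableOn
  have iA : IntegrableOn (fun x => deriv G x * deriv φ x * φ x) (Set.Ioi (0:ℝ)) :=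
    hint _ ((contDiff_infty_iff_deriv.mp hG).2.continuous.mul hφ'.continuous)
  have iB : IntegrableOn (fun x => G x * deriv (deriv φ) x * φ x) (Set.Ioi (0:ℝ)) :=
    hint _ (hG.continuous.mul (contDiff_infty_iff_deriv.mp hφ').2.continuous)
  have iC : IntegrableOn (fun x => G x * (deriv φ x)^2) (Set.Ioi (0:ℝ)) := by
    have : HasCompactSupport (fun x => G x * (deriv φ x)^2) := by
      apply HasCompactSupport.intro (hc.deriv).isCompact
      intro x hx
      have : deriv φ x = 0 := image_eq_zero_of_notMem_tsupport hx
      simp [this]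
    exact ((hG.continuous.mul ((hφ'.continuous).pow 2)).integrable_of_hasCompactSupport
      this).integrableOn
  have hzero : (0:ℝ) = (∫ x in Set.Ioi (0:ℝ), deriv G x * deriv φ x * φ x)
      + (∫ x in Set.Ioi (0:ℝ), G x * deriv (deriv φ) x * φ x)
      + ∫ x in Set.Ioi (0:ℝ), G x * (deriv φ x)^2 := by
    have e1 : ∫ x in Set.Ioi (0:ℝ), deriv F x
        = ∫ x in Set.Ioi (0:ℝ), (deriv G x * deriv φ x * φ x
            + G x * deriv (deriv φ) x * φ x + G x * (deriv φ x)^2) :=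
      integral_congr_ae (Filter.Eventually.of_forall (fun x => hder x))
    have e2 : ∫ x in Set.Ioi (0:ℝ), (deriv G x * deriv φ x * φ x
            + G x * deriv (deriv φ) x * φ x + G x * (deriv φ x)^2)
        = (∫ x in Set.Ioi (0:ℝ), (deriv G x * deriv φ x * φ x
            + G x * deriv (deriv φ) x * φ x))
          + ∫ x in Set.Ioi (0:ℝ), G x * (deriv φ x)^2 := integral_add (iA.add iB) iC
    have e3 : ∫ x in Set.Ioi (0:ℝ), (deriv G x * deriv φ x * φ x
            + G x * deriv (deriv φ) x * φ x)
        = (∫ x in Set.Ioi (0:ℝ), deriv G x * deriv φ x * φ x)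
          + ∫ x in Set.Ioi (0:ℝ), G x * deriv (deriv φ) x * φ x := integral_add iA iB
    have e0 := integral_Ioi_deriv_zero F hFc hFsupp hFpos
    rw [e1, e2, e3] at e0
    linarith
  linarith [hzero]


lemma derivG (w ρ : ℝ → ℝ) (hw : ContDiff ℝ ((⊤:ℕ∞):WithTop ℕ∞) w)
    (hρ : ContDiff ℝ ((⊤:ℕ∞):WithTop ℕ∞) ρ) (k : ℕ) (x : ℝ) :
    HasDerivAt (fun x => w x ^ 2 * ρ x ^ (2*k) * x ^ 2)
      ((2 * w x * deriv w x * ρ x ^ (2*k)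
          + w x ^ 2 * ((2*k) * ρ x ^ (2*k-1) * deriv ρ x)) * x ^ 2
        + w x ^ 2 * ρ x ^ (2*k) * (2 * x)) x := by
  have h1 : HasDerivAt w (deriv w x) x := ((contDiff_infty_iff_deriv.mp hw).1 x).hasDerivAt
  have h2 : HasDerivAt ρ (deriv ρ x) x := ((contDiff_infty_iff_deriv.mp hρ).1 x).hasDerivAt
  have hw2 : HasDerivAt (fun x => w x ^ 2) (2 * w x * deriv w x) x := by
    simpa [mul_comm, mul_assoc] using h1.fun_pow 2
  have hρ2 : HasDerivAt (fun x => ρ x ^ (2*k)) ((2*k) * ρ x ^ (2*k-1) * deriv ρ x) x := by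
    simpa using h2.fun_pow (2*k)
  have hx2 : HasDerivAt (fun x : ℝ => x ^ 2) (2 * x) x := by
    simpa using (hasDerivAt_id x).fun_pow 2
  have := (hw2.fun_mul hρ2).fun_mul hx2
  convert this using 1 <;> ring

lemma bound_derivG (w ρ : ℝ → ℝ) {c₁ C₀ : ℝ} (hc₁ : 0 < c₁) (hC₀ : 0 < C₀)
    (hwpos : ∀ x, 0 < w x) (J k : ℕ) (hk : k ≤ J) (x : ℝ) (hx : 0 < x)
    (hρlow : c₁ * (1 + x) ≤ ρ x)
    (hdw : |deriv w x| ≤ C₀ * w x * (ρ x)⁻¹)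
    (hdρ : |deriv ρ x| ≤ C₀) :
    |(2 * w x * deriv w x * ρ x ^ (2*k)
          + w x ^ 2 * ((2*k) * ρ x ^ (2*k-1) * deriv ρ x)) * x ^ 2
        + w x ^ 2 * ρ x ^ (2*k) * (2 * x)|
      ≤ (2 * C₀ * (J+1) / c₁ + 2) * (w x ^ 2 * ρ x ^ (2*k)) * x := by
  have hρpos : 0 < ρ x := lt_of_lt_of_le (by nlinarith) hρlow
  have hwx := hwpos x
  have habs : ∀ a b : ℝ, 0 ≤ a → |a * b| = a * |b| := fun a b ha => by
    rw [abs_mul, abs_of_nonneg ha]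
  have hsba : ∀ a b : ℝ, 0 ≤ b → |a * b| = |a| * b := fun a b hb => by
    rw [abs_mul, abs_of_nonneg hb]
  have hxρ : x ^ 2 * (ρ x)⁻¹ ≤ x / c₁ := by
    rw [div_eq_mul_inv, ← sub_nonneg]
    have h1 : c₁ * x ≤ ρ x := by nlinarith
    have h2 : x * c₁⁻¹ - x ^ 2 * (ρ x)⁻¹ = x * (ρ x - c₁ * x) * (c₁⁻¹ * (ρ x)⁻¹) := by
      field_simp
    rw [h2]
    exact mul_nonneg (mul_nonneg hx.le (by nlinarith)) (by positivity)
  have hppos : (0:ℝ) < ρ x ^ (2*k) := pow_pos hρpos _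
  have e1 : |2 * w x * deriv w x * ρ x ^ (2*k) * x ^ 2|
      ≤ 2 * C₀ / c₁ * (w x ^ 2 * ρ x ^ (2*k)) * x := by
    rw [hsba _ _ (by positivity : (0:ℝ) ≤ x ^ 2), hsba _ _ hppos.le,
      habs _ _ (by positivity : (0:ℝ) ≤ 2 * w x)]
    calc 2 * w x * |deriv w x| * ρ x ^ (2*k) * x ^ 2
        ≤ 2 * w x * (C₀ * w x * (ρ x)⁻¹) * ρ x ^ (2*k) * x ^ 2 := by gcongr
      _ = 2 * C₀ * (w x ^ 2 * ρ x ^ (2*k)) * (x ^ 2 * (ρ x)⁻¹) := by ring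
      _ ≤ 2 * C₀ * (w x ^ 2 * ρ x ^ (2*k)) * (x / c₁) := by gcongr
      _ = 2 * C₀ / c₁ * (w x ^ 2 * ρ x ^ (2*k)) * x := by
          rw [div_eq_mul_inv, div_eq_mul_inv]; ring
  have e2 : |w x ^ 2 * ((2*k) * ρ x ^ (2*k-1) * deriv ρ x) * x ^ 2|
      ≤ 2 * C₀ * J / c₁ * (w x ^ 2 * ρ x ^ (2*k)) * x := by
    rcases Nat.eq_zero_or_pos k with hk0 | hk1
    · subst hk0
      have hz : ((2:ℝ) * (0:ℕ)) * ρ x ^ (2*0-1) * deriv ρ x = 0 := by norm_num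
      rw [show |w x ^ 2 * ((2*(0:ℕ)) * ρ x ^ (2*0-1) * deriv ρ x) * x ^ 2| = 0 by
        norm_num]
      exact mul_nonneg (by positivity) hx.le
    · have hpow : ρ x ^ (2*k-1) = ρ x ^ (2*k) * (ρ x)⁻¹ := by
        rw [← pow_sub_one_mul (by omega : 2*k ≠ 0) (ρ x)]
        field_simp
      rw [hsba _ _ (by positivity : (0:ℝ) ≤ x ^ 2),
        habs _ _ (by positivity : (0:ℝ) ≤ w x ^ 2),
        habs _ _ (by positivity : (0:ℝ) ≤ (2*(k:ℝ)) * ρ x ^ (2*k-1)), hpow]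
      calc w x ^ 2 * (2*(k:ℝ) * (ρ x ^ (2*k) * (ρ x)⁻¹) * |deriv ρ x|) * x ^ 2
          ≤ w x ^ 2 * (2*(k:ℝ) * (ρ x ^ (2*k) * (ρ x)⁻¹) * C₀) * x ^ 2 := by gcongr
        _ = 2*(k:ℝ) * C₀ * (w x ^ 2 * ρ x ^ (2*k)) * (x ^ 2 * (ρ x)⁻¹) := by ring
        _ ≤ 2*(k:ℝ) * C₀ * (w x ^ 2 * ρ x ^ (2*k)) * (x / c₁) := by gcongr
        _ = 2 * C₀ * k / c₁ * (w x ^ 2 * ρ x ^ (2*k)) * x := by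
            rw [div_eq_mul_inv, div_eq_mul_inv]; ring
        _ ≤ 2 * C₀ * J / c₁ * (w x ^ 2 * ρ x ^ (2*k)) * x := by gcongr
  have e3 : |w x ^ 2 * ρ x ^ (2*k) * (2 * x)| = 2 * (w x ^ 2 * ρ x ^ (2*k)) * x := by
    rw [abs_of_nonneg (by positivity)]; ring
  have split : (2 * w x * deriv w x * ρ x ^ (2*k)
          + w x ^ 2 * ((2*k) * ρ x ^ (2*k-1) * deriv ρ x)) * x ^ 2
        + w x ^ 2 * ρ x ^ (2*k) * (2 * x)
      = (2 * w x * deriv w x * ρ x ^ (2*k) * x ^ 2)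
        + (w x ^ 2 * ((2*k) * ρ x ^ (2*k-1) * deriv ρ x) * x ^ 2)
        + (w x ^ 2 * ρ x ^ (2*k) * (2 * x)) := by ring
  rw [split]
  calc |2 * w x * deriv w x * ρ x ^ (2*k) * x ^ 2
        + w x ^ 2 * ((2*k) * ρ x ^ (2*k-1) * deriv ρ x) * x ^ 2
        + w x ^ 2 * ρ x ^ (2*k) * (2 * x)|
      ≤ |2 * w x * deriv w x * ρ x ^ (2*k) * x ^ 2|
        + |w x ^ 2 * ((2*k) * ρ x ^ (2*k-1) * deriv ρ x) * x ^ 2|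
        + |w x ^ 2 * ρ x ^ (2*k) * (2 * x)| := abs_add_three _ _ _
    _ ≤ 2 * C₀ / c₁ * (w x ^ 2 * ρ x ^ (2*k)) * x
        + 2 * C₀ * J / c₁ * (w x ^ 2 * ρ x ^ (2*k)) * x
        + 2 * (w x ^ 2 * ρ x ^ (2*k)) * x := by
        rw [e3]; gcongr
    _ = (2 * C₀ * (J+1) / c₁ + 2) * (w x ^ 2 * ρ x ^ (2*k)) * x := by
        rw [div_eq_mul_inv, div_eq_mul_inv, div_eq_mul_inv]; ring

set_option maxHeartbeats 1000000

lemma per_k (w ρ : ℝ → ℝ) {c₁ C₀ ε : ℝ} (hc₁ : 0 < c₁) (hC₀ : 0 < C₀)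
    (hε : ε ∈ Set.Ioo (0:ℝ) 1)
    (hw : ContDiff ℝ ((⊤:ℕ∞):WithTop ℕ∞) w) (hρ : ContDiff ℝ ((⊤:ℕ∞):WithTop ℕ∞) ρ)
    (hwpos : ∀ x, 0 < w x)
    (hρlow : ∀ x : ℝ, 0 ≤ x → c₁ * (1 + x) ≤ ρ x)
    (hdw : ∀ x : ℝ, 0 ≤ x → |deriv w x| ≤ C₀ * w x * (ρ x)⁻¹)
    (hdρ : ∀ x : ℝ, 0 ≤ x → |deriv ρ x| ≤ C₀)
    (J k : ℕ) (hk : k ≤ J)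
    (ψ : ℝ → ℝ) (hψ : ContDiff ℝ (⊤ : ℕ∞) ψ) (hcψ : HasCompactSupport ψ)
    (hpψ : tsupport ψ ⊆ Set.Ioi 0) :
    (∫ x in Set.Ioi (0:ℝ),
        w x ^ 2 * ρ x ^ (2 * k) * x ^ 2 * iteratedDeriv (k + 2) ψ x * iteratedDeriv k ψ x)
      ≤ -(1 - ε) * (∫ x in Set.Ioi (0:ℝ),
            w x ^ 2 * ρ x ^ (2 * k) * x ^ 2 * (iteratedDeriv (k + 1) ψ x) ^ 2)
        + ((2 * C₀ * (J+1) / c₁ + 2)^2 / (4 * ε)) *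
            ∫ x in Set.Ioi (0:ℝ), w x ^ 2 * ρ x ^ (2 * k) * (iteratedDeriv k ψ x) ^ 2 := by
  obtain ⟨hε0, hε1⟩ := hε
  set K : ℝ := 2 * C₀ * (J+1) / c₁ + 2 with hK
  have hKpos : 0 < K := by positivity
  set Cε : ℝ := K^2 / (4 * ε) with hCε
  have hCK : K^2 = 4 * ε * Cε := by rw [hCε]; field_simp
  set φ : ℝ → ℝ := iteratedDeriv k ψ with hφdef
  have hφ : ContDiff ℝ ((⊤:ℕ∞):WithTop ℕ∞) φ := cd_itd hψ k
  have hcφ : HasCompactSupport φ := hcs_itd hcψ k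
  have hpφ : tsupport φ ⊆ Set.Ioi 0 := (tsupport_itd_subset ψ k).trans hpψ
  have hφ' : ContDiff ℝ ((⊤:ℕ∞):WithTop ℕ∞) (deriv φ) := (contDiff_infty_iff_deriv.mp hφ).2
  have hG : ContDiff ℝ ((⊤:ℕ∞):WithTop ℕ∞) (fun x => w x ^ 2 * ρ x ^ (2*k) * x ^ 2) :=
    ((hw.pow 2).mul (hρ.pow (2*k))).mul (contDiff_id.pow 2)
  have hd2 : iteratedDeriv (k + 2) ψ = deriv (deriv φ) := by
    rw [hφdef, ← iteratedDeriv_succ, ← iteratedDeriv_succ]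
  have hd1 : iteratedDeriv (k + 1) ψ = deriv φ := by rw [hφdef, ← iteratedDeriv_succ]
  rw [hd2, hd1]
  have hibp := ibp_core (fun x => w x ^ 2 * ρ x ^ (2*k) * x ^ 2) φ hG hφ hcφ hpφ
  have hibp' : (∫ x in Set.Ioi (0:ℝ),
        w x ^ 2 * ρ x ^ (2 * k) * x ^ 2 * deriv (deriv φ) x * φ x)
      = -(∫ x in Set.Ioi (0:ℝ),
            deriv (fun x => w x ^ 2 * ρ x ^ (2*k) * x ^ 2) x * deriv φ x * φ x)
        - ∫ x in Set.Ioi (0:ℝ), w x ^ 2 * ρ x ^ (2 * k) * x ^ 2 * (deriv φ x)^2 := hibp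
  rw [hibp']
  -- integrability facts
  have hgc : Continuous (fun x => w x ^ 2 * ρ x ^ (2*k)) :=
    (hw.continuous.pow 2).mul (hρ.continuous.pow (2*k))
  have hGc : Continuous (fun x => w x ^ 2 * ρ x ^ (2*k) * x ^ 2) :=
    hgc.mul (continuous_id.pow 2)
  have hdGc : Continuous (deriv (fun x => w x ^ 2 * ρ x ^ (2*k) * x ^ 2)) :=
    (contDiff_infty_iff_deriv.mp hG).2.continuous
  have hφc : Continuous φ := hφ.continuous
  have hdφc : Continuous (deriv φ) := hφ'.continuous
  have hcs1 : HasCompactSupport (fun x =>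
      deriv (fun x => w x ^ 2 * ρ x ^ (2*k) * x ^ 2) x * deriv φ x * φ x) := hcφ.mul_left
  have iA : IntegrableOn (fun x =>
      deriv (fun x => w x ^ 2 * ρ x ^ (2*k) * x ^ 2) x * deriv φ x * φ x)
      (Set.Ioi (0:ℝ)) :=
    (((hdGc.mul hdφc).mul hφc).integrable_of_hasCompactSupport hcs1).integrableOn
  have hcsd : HasCompactSupport (fun x => (deriv φ x)^2) := by
    apply HasCompactSupport.intro hcφ.deriv.isCompact
    intro x hx
    have : deriv φ x = 0 := image_eq_zero_of_notMem_tsupport hx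
    simp [this]
  have iB : IntegrableOn (fun x => w x ^ 2 * ρ x ^ (2*k) * x ^ 2 * (deriv φ x)^2)
      (Set.Ioi (0:ℝ)) := by
    have hcs : HasCompactSupport (fun x => w x ^ 2 * ρ x ^ (2*k) * x ^ 2 * (deriv φ x)^2) :=
      hcsd.mul_left
    exact ((hGc.mul (hdφc.pow 2)).integrable_of_hasCompactSupport hcs).integrableOn
  have iD : IntegrableOn (fun x => w x ^ 2 * ρ x ^ (2*k) * (φ x)^2) (Set.Ioi (0:ℝ)) := by
    have hcs2 : HasCompactSupport (fun x => (φ x)^2) := by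
      apply HasCompactSupport.intro hcφ.isCompact
      intro x hx
      have : φ x = 0 := image_eq_zero_of_notMem_tsupport hx
      simp [this]
    exact ((hgc.mul (hφc.pow 2)).integrable_of_hasCompactSupport
      hcs2.mul_left).integrableOn
  have iRHS : IntegrableOn (fun x =>
      ε * (w x ^ 2 * ρ x ^ (2*k) * x ^ 2 * (deriv φ x)^2)
        + Cε * (w x ^ 2 * ρ x ^ (2*k) * (φ x)^2)) (Set.Ioi (0:ℝ)) :=
    (iB.const_mul ε).add (iD.const_mul Cε)
  -- pointwise Young
  have hkey : ∀ x ∈ Set.Ioi (0:ℝ),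
      -(deriv (fun x => w x ^ 2 * ρ x ^ (2*k) * x ^ 2) x * deriv φ x * φ x)
        ≤ ε * (w x ^ 2 * ρ x ^ (2*k) * x ^ 2 * (deriv φ x)^2)
          + Cε * (w x ^ 2 * ρ x ^ (2*k) * (φ x)^2) := by
    intro x hx
    have hx0 : (0:ℝ) < x := hx
    have hD : deriv (fun x => w x ^ 2 * ρ x ^ (2*k) * x ^ 2) x
        = (2 * w x * deriv w x * ρ x ^ (2*k)
            + w x ^ 2 * ((2*k) * ρ x ^ (2*k-1) * deriv ρ x)) * x ^ 2
          + w x ^ 2 * ρ x ^ (2*k) * (2 * x) := (derivG w ρ hw hρ k x).deriv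
    have hDb : |deriv (fun x => w x ^ 2 * ρ x ^ (2*k) * x ^ 2) x|
        ≤ K * (w x ^ 2 * ρ x ^ (2*k)) * x := by
      rw [hD]
      exact bound_derivG w ρ hc₁ hC₀ hwpos J k hk x hx0 (hρlow x hx0.le)
        (hdw x hx0.le) (hdρ x hx0.le)
    set D := deriv (fun x => w x ^ 2 * ρ x ^ (2*k) * x ^ 2) x
    set g : ℝ := w x ^ 2 * ρ x ^ (2*k) with hg
    have hgpos : 0 ≤ g := by
      have := (hwpos x).le
      have : 0 < ρ x := lt_of_lt_of_le (by nlinarith [hx0]) (hρlow x hx0.le)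
      positivity
    have h1 : -(D * deriv φ x * φ x) ≤ |D| * |deriv φ x| * |φ x| := by
      calc -(D * deriv φ x * φ x) ≤ |D * deriv φ x * φ x| := neg_le_abs _
        _ = |D| * |deriv φ x| * |φ x| := by rw [abs_mul, abs_mul]

    set a : ℝ := |deriv φ x| with ha
    set b : ℝ := |φ x| with hb
    have ha0 : 0 ≤ a := abs_nonneg _
    have hb0 : 0 ≤ b := abs_nonneg _
    have h2 : |D| * a * b ≤ K * g * x * a * b := by
      have hnn : 0 ≤ a * b := mul_nonneg ha0 hb0
      have h := mul_le_mul_of_nonneg_right hDb hnn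
      calc |D| * a * b = |D| * (a * b) := by ring
        _ ≤ K * (w x ^ 2 * ρ x ^ (2*k)) * x * (a * b) := h
        _ = K * g * x * a * b := by rw [hg]; ring
    have h3 : K * g * x * a * b ≤ ε * (g * x ^ 2 * a ^ 2) + Cε * (g * b ^ 2) := by
      have hid : ε * (g * x ^ 2 * a ^ 2) + Cε * (g * b ^ 2) - K * g * x * a * b
          = g * (2 * ε * (x * a) - K * b) ^ 2 / (4 * ε) := by
        rw [hCε]; field_simp; ring
      have hnn : 0 ≤ g * (2 * ε * (x * a) - K * b) ^ 2 / (4 * ε) :=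
        div_nonneg (mul_nonneg hgpos (sq_nonneg _)) (by positivity)
      linarith [hid ▸ hnn]
    calc -(D * deriv φ x * φ x) ≤ K * g * x * a * b := h1.trans h2
      _ ≤ ε * (g * x ^ 2 * a ^ 2) + Cε * (g * b ^ 2) := h3
      _ = ε * (w x ^ 2 * ρ x ^ (2*k) * x ^ 2 * (deriv φ x)^2)
          + Cε * (w x ^ 2 * ρ x ^ (2*k) * (φ x)^2) := by
          rw [hg, ha, hb, sq_abs, sq_abs]
  have hmono : -(∫ x in Set.Ioi (0:ℝ),
        deriv (fun x => w x ^ 2 * ρ x ^ (2*k) * x ^ 2) x * deriv φ x * φ x)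
      ≤ ε * (∫ x in Set.Ioi (0:ℝ), w x ^ 2 * ρ x ^ (2*k) * x ^ 2 * (deriv φ x)^2)
        + Cε * ∫ x in Set.Ioi (0:ℝ), w x ^ 2 * ρ x ^ (2*k) * (φ x)^2 := by
    rw [← integral_neg]
    calc ∫ x in Set.Ioi (0:ℝ),
          -(deriv (fun x => w x ^ 2 * ρ x ^ (2*k) * x ^ 2) x * deriv φ x * φ x)
        ≤ ∫ x in Set.Ioi (0:ℝ),
            (ε * (w x ^ 2 * ρ x ^ (2*k) * x ^ 2 * (deriv φ x)^2)
              + Cε * (w x ^ 2 * ρ x ^ (2*k) * (φ x)^2)) := by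
          apply setIntegral_mono_on iA.neg iRHS measurableSet_Ioi
          exact hkey
      _ = ε * (∫ x in Set.Ioi (0:ℝ), w x ^ 2 * ρ x ^ (2*k) * x ^ 2 * (deriv φ x)^2)
          + Cε * ∫ x in Set.Ioi (0:ℝ), w x ^ 2 * ρ x ^ (2*k) * (φ x)^2 := by
          rw [integral_add (iB.const_mul ε) (iD.const_mul Cε),
            integral_const_mul, integral_const_mul]
  have := hmono
  linarith [this]

open scoped BigOperators

noncomputable def sobNormSq (w ρ : ℝ → ℝ) (J : ℕ) (ψ : ℝ → ℝ) : ℝ :=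
  ∑ k ∈ Finset.range (J + 1),
    ∫ x in Set.Ioi (0 : ℝ), w x ^ 2 * ρ x ^ (2 * k) * (iteratedDeriv k ψ x) ^ 2

def IsAdmissibleWeightPair (m : ℕ) (w ρ : ℝ → ℝ) : Prop :=
  ContDiff ℝ (⊤ : ℕ∞) w ∧ ContDiff ℝ (⊤ : ℕ∞) ρ ∧ (∀ x, 0 < w x) ∧
  (∃ c₁ c₂ : ℝ, 0 < c₁ ∧ 0 < c₂ ∧
    ∀ x : ℝ, 0 ≤ x → c₁ * (1 + x) ≤ ρ x ∧ ρ x ≤ c₂ * (1 + x)) ∧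
  (∃ C₀ : ℝ, 0 < C₀ ∧
    ∀ x : ℝ, 0 ≤ x → ∀ k : ℕ, 1 ≤ k → k ≤ m →
      |iteratedDeriv k ρ x| ≤ C₀ * ρ x ^ ((1 : ℤ) - k) ∧
      |iteratedDeriv k w x| ≤ C₀ * w x * ρ x ^ (-(k : ℤ)))

def IsCcInfOnPos (ψ : ℝ → ℝ) : Prop :=
  ContDiff ℝ (⊤ : ℕ∞) ψ ∧ HasCompactSupport ψ ∧ tsupport ψ ⊆ Set.Ioi 0

/-- fourth estimate of Lemma 8.1, handling the degenerate
second-order term `λ²ψ″` arising from the systematic risk operator. -/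
theorem integration_by_parts_degenerate_second_order_sq
    (J : ℕ) (w ρ : ℝ → ℝ) (hwρ : IsAdmissibleWeightPair (J + 1) w ρ) :
    ∀ ε ∈ Set.Ioo (0 : ℝ) 1,
      ∃ C : ℝ, 0 < C ∧ ∀ ψ : ℝ → ℝ, IsCcInfOnPos ψ →
        (∑ k ∈ Finset.range (J + 1),
            ∫ x in Set.Ioi (0 : ℝ),
              w x ^ 2 * ρ x ^ (2 * k) * x ^ 2 * iteratedDeriv (k + 2) ψ x * iteratedDeriv k ψ x)
          ≤ -(1 - ε) *
              (∑ k ∈ Finset.range (J + 1),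
                ∫ x in Set.Ioi (0 : ℝ),
                  w x ^ 2 * ρ x ^ (2 * k) * x ^ 2 * (iteratedDeriv (k + 1) ψ x) ^ 2)
            + C * sobNormSq w ρ J ψ := by
  obtain ⟨hw, hρ, hwpos, ⟨c₁, c₂, hc₁, hc₂, hbnd⟩, ⟨C₀, hC₀, hder⟩⟩ := hwρ
  intro ε hε
  have hε0 := hε.1
  set K : ℝ := 2 * C₀ * (J+1) / c₁ + 2 with hK
  have hKpos : 0 < K := by positivity
  refine ⟨K^2 / (4 * ε), div_pos (pow_pos hKpos 2) (by linarith), ?_⟩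
  intro ψ ⟨hψ, hcψ, hpψ⟩
  have hdw : ∀ x : ℝ, 0 ≤ x → |deriv w x| ≤ C₀ * w x * (ρ x)⁻¹ := by
    intro x hx
    have h := (hder x hx 1 le_rfl (by omega)).2
    rwa [iteratedDeriv_one, show (-(1:ℕ) : ℤ) = -1 by norm_num, zpow_neg_one] at h
  have hdρ : ∀ x : ℝ, 0 ≤ x → |deriv ρ x| ≤ C₀ := by
    intro x hx
    have h := (hder x hx 1 le_rfl (by omega)).1
    rwa [iteratedDeriv_one, show ((1:ℤ) - (1:ℕ)) = 0 by norm_num, zpow_zero, mul_one] at h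
  have hsum := Finset.sum_le_sum (f := fun k => ∫ x in Set.Ioi (0:ℝ),
      w x ^ 2 * ρ x ^ (2 * k) * x ^ 2 * iteratedDeriv (k + 2) ψ x * iteratedDeriv k ψ x)
    (g := fun k => -(1 - ε) * (∫ x in Set.Ioi (0:ℝ),
        w x ^ 2 * ρ x ^ (2 * k) * x ^ 2 * (iteratedDeriv (k + 1) ψ x) ^ 2)
      + (K^2 / (4 * ε)) *
        ∫ x in Set.Ioi (0:ℝ), w x ^ 2 * ρ x ^ (2 * k) * (iteratedDeriv k ψ x) ^ 2)
    (fun k hk => per_k w ρ hc₁ hC₀ hε (hw.of_le (by simp)) (hρ.of_le (by simp)) hwpos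
      (fun x hx => (hbnd x hx).1) hdw hdρ J k
      (Nat.lt_succ_iff.mp (Finset.mem_range.mp hk)) ψ hψ hcψ hpψ)
  rw [Finset.sum_add_distrib, ← Finset.mul_sum, ← Finset.mul_sum] at hsum
  exact hsum
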